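/- arXiv:2307.13830 — 2 statements merged into one kernel-verified Lean document; each statement's English description precedes it below -/
import Mathlib

section
/- (i) If ran(G_{z∘}) ∩ 𝔥₁ = {0} for a single z∘ ∈ ρ(H), then ran(G_z) ∩ 𝔥₁ = {0} for every z ∈ ρ(H). (ii) For z ∈ ρ(H), ran(G_z) ∩ 𝔥₁ = {0} if and only if ran(A*) ∩ 𝔉 = {0}. -/
open scoped InnerProductSpace ComplexConjugate

noncomputable section

local notation "⟪" x ", " y "⟫" => @inner ℂ _ _ x y

/-- Abstract context for the paper "On the resolvent of H+A*+A":
`F` is the Hilbert space `𝔉`, `H1` is the space `𝔥₁ = dom(H)` endowed with the graph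
norm, `Hm1` is the dual space `𝔥₋₁`.  `j1 : 𝔥₁ ↪ 𝔉` and `jm : 𝔉 ↪ 𝔥₋₁` are the dense
inclusions, `Hop` is `H` viewed as a bounded operator `𝔥₁ → 𝔉`, `Hbar` is its closure
`H̄ : 𝔉 → 𝔥₋₁`, `lamInf = inf σ(H)`, `res = ρ(H)`, `RF z = (-H+z)⁻¹ : 𝔉 → 𝔥₁`,
`RM z` is its extension `𝔥₋₁ → 𝔉`, `pair` is the duality pairing between `𝔥₋₁` and `𝔥₁`
(conjugate-linear in the first variable) extending the scalar product of `𝔉`,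
`ns s` is the scale norm `‖ψ‖_s = ‖(H²+1)^{s/2}ψ‖` on `𝔥₁` (`0 ≤ s ≤ 1`),
`A ∈ 𝔅(𝔥₁,𝔉)` and `Astar : 𝔉 → 𝔥₋₁` is its dual-pairing adjoint. -/
structure Ctx (F H1 Hm1 : Type*)
    [NormedAddCommGroup F] [InnerProductSpace ℂ F] [CompleteSpace F]
    [NormedAddCommGroup H1] [InnerProductSpace ℂ H1] [CompleteSpace H1]
    [NormedAddCommGroup Hm1] [InnerProductSpace ℂ Hm1] [CompleteSpace Hm1] where
  j1 : H1 →L[ℂ] F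
  jm : F →L[ℂ] Hm1
  Hop : H1 →L[ℂ] F
  Hbar : F →L[ℂ] Hm1
  lamInf : ℝ
  res : Set ℂ
  RF : ℂ → (F →L[ℂ] H1)
  RM : ℂ → (Hm1 →L[ℂ] F)
  pair : Hm1 → H1 → ℂ
  ns : ℝ → H1 → ℝ
  A : H1 →L[ℂ] F
  Astar : F →L[ℂ] Hm1
  j1_inj : Function.Injective j1
  j1_dense : DenseRange j1
  jm_inj : Function.Injective jm
  jm_dense : DenseRange jm
  /-- the norm of `𝔥₁` is the graph norm of `H` -/
  norm1_sq : ∀ ψ : H1, ‖ψ‖ ^ 2 = ‖j1 ψ‖ ^ 2 + ‖Hop ψ‖ ^ 2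
  /-- `H` is symmetric -/
  Hsymm : ∀ ψ φ : H1, ⟪j1 ψ, Hop φ⟫ = ⟪Hop ψ, j1 φ⟫
  /-- `H` is self-adjoint: non-real points belong to `ρ(H)` -/
  res_nonreal : ∀ z : ℂ, z.im ≠ 0 → z ∈ res
  /-- `H` is bounded from below by `lamInf` -/
  res_below : ∀ x : ℝ, x < lamInf → (x : ℂ) ∈ res
  /-- `lamInf` is exactly `inf σ(H)` -/
  lamInf_not_res : (lamInf : ℂ) ∉ res
  RF_inv_left : ∀ z ∈ res, (RF z).comp (z • j1 - Hop) = ContinuousLinearMap.id ℂ H1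
  RF_inv_right : ∀ z ∈ res, (z • j1 - Hop).comp (RF z) = ContinuousLinearMap.id ℂ F
  /-- `H̄` extends `H` -/
  Hbar_ext : Hbar.comp j1 = jm.comp Hop
  /-- `RM z` extends `RF z` -/
  RM_ext : ∀ z ∈ res, (RM z).comp jm = j1.comp (RF z)
  RM_inv_left : ∀ z ∈ res, (RM z).comp (z • jm - Hbar) = ContinuousLinearMap.id ℂ F
  RM_inv_right : ∀ z ∈ res, (z • jm - Hbar).comp (RM z) = ContinuousLinearMap.id ℂ Hm1
  pair_add : ∀ x y φ, pair (x + y) φ = pair x φ + pair y φ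
  pair_smul : ∀ (a : ℂ) x φ, pair (a • x) φ = starRingEnd ℂ a * pair x φ
  pair_addr : ∀ x φ₁ φ₂, pair x (φ₁ + φ₂) = pair x φ₁ + pair x φ₂
  pair_smulr : ∀ (a : ℂ) x φ, pair x (a • φ) = a * pair x φ
  pair_cont : ∀ φ, Continuous fun x => pair x φ
  /-- the pairing extends the scalar product of `𝔉` -/
  pair_jm : ∀ (ψ : F) (φ : H1), pair (jm ψ) φ = ⟪ψ, j1 φ⟫
  pair_nondeg : ∀ x, (∀ φ, pair x φ = 0) → x = 0
  ns_zero : ∀ ψ, ns 0 ψ = ‖j1 ψ‖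
  ns_one : ∀ ψ, ns 1 ψ = ‖ψ‖
  ns_nonneg : ∀ s ψ, 0 ≤ ns s ψ
  ns_mono : ∀ s t : ℝ, 0 ≤ s → s ≤ t → t ≤ 1 → ∀ ψ, ns s ψ ≤ ns t ψ
  /-- interpolation property of the scale of Hilbert spaces -/
  ns_interp : ∀ s : ℝ, 0 ≤ s → s ≤ 1 → ∀ ψ, ns s ψ ≤ ‖ψ‖ ^ s * ‖j1 ψ‖ ^ (1 - s)
  /-- `Astar` is the dual-pairing adjoint of `A` -/
  Astar_spec : ∀ (ψ : F) (φ : H1), pair (Astar ψ) φ = ⟪ψ, A φ⟫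

variable {F H1 Hm1 : Type*}
  [NormedAddCommGroup F] [InnerProductSpace ℂ F] [CompleteSpace F]
  [NormedAddCommGroup H1] [InnerProductSpace ℂ H1] [CompleteSpace H1]
  [NormedAddCommGroup Hm1] [InnerProductSpace ℂ Hm1] [CompleteSpace Hm1]

namespace Ctx

variable (c : Ctx F H1 Hm1)

/-- `G_z := (A R_{z̄})* ∈ 𝔅(𝔉)`. -/
def G (z : ℂ) : F →L[ℂ] F :=
  ContinuousLinearMap.adjoint (c.A.comp (c.RF (starRingEnd ℂ z)))

/-- `G_z* ∈ 𝔅(𝔉)`, for `z` real this is `G*`. -/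
def Gst (lam : ℝ) : F →L[ℂ] F :=
  ContinuousLinearMap.adjoint (c.G (lam : ℂ))

/-- `𝔸 : 𝔥₁ → 𝔉⊕𝔥₁`, `𝔸ψ = Aψ ⊕ ψ`. -/
def Ab : H1 →L[ℂ] (F × H1) :=
  c.A.prod (ContinuousLinearMap.id ℂ H1)

/-- `𝔾_z : 𝔉⊕𝔥₋₁ → 𝔉`, `𝔾_z(ψ⊕φ) = G_zψ + R_zφ`. -/
def Gb (z : ℂ) : (F × Hm1) →L[ℂ] F :=
  (c.G z).comp (ContinuousLinearMap.fst ℂ F Hm1) +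
    (c.RM z).comp (ContinuousLinearMap.snd ℂ F Hm1)

/-- `𝔾_{z̄}* : 𝔉 → 𝔉⊕𝔥₁`, `ψ ↦ (A R_z ψ) ⊕ (R_z ψ)`. -/
def Gbstar (z : ℂ) : F →L[ℂ] (F × H1) :=
  (c.A.comp (c.RF z)).prod (c.RF z)

/-- `M_z = 𝔸(𝔾 - 𝔾_z) = (z-λ∘) 𝔾* 𝔾_z : 𝔉⊕𝔥₋₁ → 𝔉⊕𝔥₁`. -/
def M (lam : ℝ) (z : ℂ) : (F × Hm1) →L[ℂ] (F × H1) :=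
  (z - (lam : ℂ)) • ((c.Gbstar (lam : ℂ)).comp (c.Gb z))

/-- `M' : 𝔉⊕𝔥₋₁ → 𝔉⊕𝔥₁` is a realization of `M_z := 𝔸(𝔾 - 𝔾_z)`, i.e. the second
component of `M' x` is the lift to `𝔥₁` of `(𝔾 - 𝔾_z)x` and the first component is `A`
applied to it. -/
def IsMLift (lam : ℝ) (z : ℂ) (M' : (F × Hm1) →L[ℂ] (F × H1)) : Prop :=
  ∀ x : F × Hm1,
    c.j1 ((M' x).2) = c.Gb (lam : ℂ) x - c.Gb z x ∧ (M' x).1 = c.A ((M' x).2)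

/-- The domain `𝔇 = {ψ ∈ 𝔉 : ψ - Gψ ∈ 𝔥₁}` (with `G = G_{λ∘}`). -/
def Dom (lam : ℝ) : Set F :=
  {ψ | ∃ φ : H1, ψ - c.G (lam : ℂ) ψ = c.j1 φ}

/-- The action of the block operator matrix `Θ_S = [[T_S, 1-G*],[1-G, -R]]` on the element
`ψ ⊕ φ` of its domain `𝔇⊕𝔉`; here `ψ0 ∈ 𝔥₁` is the lift of `(1-G)ψ`, so that
`T_Sψ = (1-G*)S(1-G)ψ = (1-G*)(Sψ0)`. -/
def ThetaS (lam : ℝ) (S : H1 →ₗ[ℂ] F) (ψ : F) (ψ0 : H1) (φ : F) : F × H1 :=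
  (S ψ0 - c.Gst lam (S ψ0) + φ - c.Gst lam φ, ψ0 - c.RF (lam : ℂ) φ)

/-- The action of `Θ_S + M_z` on `ψ ⊕ φ ∈ 𝔇⊕𝔉`. -/
def ThetaMS (lam : ℝ) (S : H1 →ₗ[ℂ] F) (z : ℂ) (ψ : F) (ψ0 : H1) (φ : F) : F × H1 :=
  c.ThetaS lam S ψ ψ0 φ + c.M lam z (ψ, c.jm φ)

/-- `Λ ∈ 𝔅(𝔉⊕𝔥₁, 𝔉⊕𝔥₋₁)` is the (two-sided) inverse of `Θ_S + M_z`. -/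
def IsInvTheta (lam : ℝ) (S : H1 →ₗ[ℂ] F) (z : ℂ)
    (Λ : (F × H1) →L[ℂ] (F × Hm1)) : Prop :=
  (∀ (ψ : F) (ψ0 : H1) (φ : F), c.j1 ψ0 = ψ - c.G (lam : ℂ) ψ →
    Λ (c.ThetaMS lam S z ψ ψ0 φ) = (ψ, c.jm φ)) ∧
  (∀ y : F × H1, ∃ (ψ : F) (ψ0 : H1) (φ : F),
    c.j1 ψ0 = ψ - c.G (lam : ℂ) ψ ∧ Λ y = (ψ, c.jm φ) ∧ c.ThetaMS lam S z ψ ψ0 φ = y)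

/-- `Z_S := {z ∈ ρ(H) : (Θ_S + M_z)⁻¹ ∈ 𝔅(𝔉⊕𝔥₁, 𝔉⊕𝔥₋₁)}`. -/
def ZS (lam : ℝ) (S : H1 →ₗ[ℂ] F) : Set ℂ :=
  {z | z ∈ c.res ∧ ∃ Λ : (F × H1) →L[ℂ] (F × Hm1), c.IsInvTheta lam S z Λ}

/-- `R̂_z = R_z + 𝔾_z Λ 𝔾_{z̄}* : 𝔉 → 𝔉`. -/
def Rhat (z : ℂ) (Λ : (F × H1) →L[ℂ] (F × Hm1)) : F →L[ℂ] F :=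
  c.j1.comp (c.RF z) + (c.Gb z).comp (Λ.comp (c.Gbstar z))

/-- The duality pairing `⟨⟨·,·⟩⟩_{-1,1}` between `𝔉⊕𝔥₋₁` and `𝔉⊕𝔥₁`. -/
def pairX (x : F × Hm1) (y : F × H1) : ℂ :=
  ⟪x.1, y.1⟫ + c.pair x.2 y.2

/-- Assumption (H3): `ran(G_z) ∩ 𝔥₁ = {0}` for all `z ∈ ρ(H)`. -/
def H3 : Prop :=
  ∀ z ∈ c.res, ∀ (ψ : F) (φ : H1), c.G z ψ = c.j1 φ → c.G z ψ = 0

/-- `S` is a symmetric operator (with domain containing `𝔥₁`). -/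
def IsSymmOp (S : H1 →ₗ[ℂ] F) : Prop :=
  ∀ ψ φ : H1, ⟪S ψ, c.j1 φ⟫ = ⟪c.j1 ψ, S φ⟫

/-- `S` is `H`-small with constants `a`, `b`. -/
def HSmall (S : H1 →ₗ[ℂ] F) (a b : ℝ) : Prop :=
  ∀ ψ : H1, ‖S ψ‖ ≤ a * ‖c.Hop ψ‖ + b * ‖c.j1 ψ‖

/-- `HSf ψ ψ0` realizes the action of `H_S = H̄ + A* + A_S` on `ψ ∈ 𝔇` (with `ψ0` the lift
of `(1-G)ψ`): `H_Sψ ∈ 𝔉` is characterized by `H_Sψ = H̄ψ + A*ψ + Aψ0 - T_Sψ` in `𝔥₋₁`. -/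
def IsHSAction (lam : ℝ) (S : H1 →ₗ[ℂ] F) (HSf : F → H1 → F) : Prop :=
  ∀ (ψ : F) (ψ0 : H1), c.j1 ψ0 = ψ - c.G (lam : ℂ) ψ →
    c.jm (HSf ψ ψ0) =
      c.Hbar ψ + c.Astar ψ + c.jm (c.A ψ0 - (S ψ0 - c.Gst lam (S ψ0)))

/-- `Rop = (-(H+W)+z)⁻¹`, the resolvent at `z` of the perturbation of `H` by the
`H`-bounded operator `W` (with domain `𝔥₁`). -/
def IsResolventOf (W : H1 →L[ℂ] F) (z : ℂ) (Rop : F →L[ℂ] F) : Prop :=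
  (∀ ψ : H1, Rop (z • c.j1 ψ - (c.Hop ψ + W ψ)) = c.j1 ψ) ∧
  (∀ χ : F, ∃ ψ : H1, Rop χ = c.j1 ψ ∧ z • c.j1 ψ - (c.Hop ψ + W ψ) = χ)

/-- `Rop = (-H_S+z)⁻¹`, the resolvent at `z` of the operator `H_S` with domain `𝔇` whose
action is realized by `HSf`. -/
def IsResolventOfD (lam : ℝ) (HSf : F → H1 → F) (z : ℂ) (Rop : F →L[ℂ] F) : Prop :=
  (∀ (ψ : F) (ψ0 : H1), c.j1 ψ0 = ψ - c.G (lam : ℂ) ψ →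
    Rop (z • ψ - HSf ψ ψ0) = ψ) ∧
  (∀ χ : F, ∃ (ψ : F) (ψ0 : H1),
    c.j1 ψ0 = ψ - c.G (lam : ℂ) ψ ∧ Rop χ = ψ ∧ z • ψ - HSf ψ ψ0 = χ)

/-- `ψ ∈ 𝔥_s` (for `0 ≤ s ≤ 1`), i.e. `ψ ∈ 𝔉` is the limit of a `‖·‖_s`-Cauchy sequence
of elements of `𝔥₁`. -/
def memHs (s : ℝ) (ψ : F) : Prop :=
  ∃ u : ℕ → H1, Filter.Tendsto (fun n => c.j1 (u n)) Filter.atTop (nhds ψ) ∧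
    ∀ ε > 0, ∃ N, ∀ m ≥ N, ∀ n ≥ N, c.ns s (u m - u n) < ε

/-- `T ∈ 𝔅(𝔥_s, 𝔉)` (with `T` given on `𝔥₁`): `T` is bounded for the `‖·‖_s`-norm. -/
def MemBs (s : ℝ) (T : H1 →L[ℂ] F) : Prop :=
  ∃ C : ℝ, 0 ≤ C ∧ ∀ ψ : H1, ‖T ψ‖ ≤ C * c.ns s ψ

/-- `T` (with domain containing `𝔥₁ ⊆ 𝔥_{1/2}`) is closable as an operator in `𝔉`. -/
def ClosableOp (T : H1 →L[ℂ] F) : Prop :=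
  ∀ (u : ℕ → H1) (χ : F),
    Filter.Tendsto (fun n => c.j1 (u n)) Filter.atTop (nhds 0) →
    Filter.Tendsto (fun n => T (u n)) Filter.atTop (nhds χ) → χ = 0

/-- `Tstar` is (the restriction to `𝔥₁` of) the adjoint of `T`. -/
def IsAdjointOn (T Tstar : H1 →L[ℂ] F) : Prop :=
  ∀ ψ φ : H1, ⟪Tstar ψ, c.j1 φ⟫ = ⟪c.j1 ψ, T φ⟫

/-- `G_{n,z} := (A_n R_{z̄})* ∈ 𝔅(𝔉)`. -/
def Gn (An : H1 →L[ℂ] F) (z : ℂ) : F →L[ℂ] F :=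
  ContinuousLinearMap.adjoint (An.comp (c.RF (starRingEnd ℂ z)))

/-- `B = A_n R A_n* ∈ 𝔅(𝔉)`: since `R A_n*ψ = G_{n,λ∘}ψ ∈ 𝔥₁`, the operator `B` is
`A_n` applied to the lift of `G_{n,λ∘}ψ`. -/
def IsAnRAn (lam : ℝ) (An : H1 →L[ℂ] F) (B : F →L[ℂ] F) : Prop :=
  ∀ ψ : F, ∃ φ : H1, c.j1 φ = c.Gn An (lam : ℂ) ψ ∧ B ψ = An φ

/-- `𝔾_{n,z}` as a bounded operator `𝔉⊕𝔉 → 𝔉`, `ψ⊕φ ↦ G_{n,z}ψ + R_zφ`. -/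
def Gnb (An : H1 →L[ℂ] F) (z : ℂ) : (F × F) →L[ℂ] F :=
  (c.Gn An z).comp (ContinuousLinearMap.fst ℂ F F) +
    (c.j1.comp (c.RF z)).comp (ContinuousLinearMap.snd ℂ F F)

/-- `𝔾_{n,z̄}* : 𝔉 → 𝔉⊕𝔉`, `ψ ↦ (A_n R_z ψ) ⊕ (R_z ψ)`. -/
def Gnbstar (An : H1 →L[ℂ] F) (z : ℂ) : F →L[ℂ] (F × F) :=
  (An.comp (c.RF z)).prod (c.j1.comp (c.RF z))

/-- `M_{n,z} = 𝔸_n(𝔾_n - 𝔾_{n,z}) = (z-λ∘)𝔾_n*𝔾_{n,z} : 𝔉⊕𝔉 → 𝔉⊕𝔥₁ ⊆ 𝔉⊕𝔉`. -/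
def Mn (lam : ℝ) (An : H1 →L[ℂ] F) (z : ℂ) : (F × F) →L[ℂ] (F × F) :=
  (z - (lam : ℂ)) • ((c.Gnbstar An (lam : ℂ)).comp (c.Gnb An z))

/-- `Θ_n = [[E_n - A_nRA_n*, 1-G_n*],[1-G_n, -R]] : 𝔉⊕𝔉 → 𝔉⊕𝔉`. -/
def Thetan (lam : ℝ) (An : H1 →L[ℂ] F) (En AnRAn : F →L[ℂ] F) :
    (F × F) →L[ℂ] (F × F) :=
  ((En - AnRAn).comp (ContinuousLinearMap.fst ℂ F F) +
      ((1 : F →L[ℂ] F) - An.comp (c.RF (lam : ℂ))).comp (ContinuousLinearMap.snd ℂ F F)).prod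
    (((1 : F →L[ℂ] F) - c.Gn An (lam : ℂ)).comp (ContinuousLinearMap.fst ℂ F F) -
      (c.j1.comp (c.RF (lam : ℂ))).comp (ContinuousLinearMap.snd ℂ F F))

end Ctx

/-! `G_z = R_z A*` as maps `𝔉 → 𝔉`: pairing `A*ψ` against `R_{z̄}χ` and using that the
pairing extends the scalar product gives `⟪G_zψ, χ⟫ = ⟪R_z A*ψ, χ⟫`. Since `R_z` is a bijection
`𝔥₋₁ → 𝔉` carrying `𝔉` onto `𝔥₁`, the space `ran(G_z) ∩ 𝔥₁` is the image under `R_z` of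
`ran(A*) ∩ 𝔉`; it is therefore trivial exactly when `ran(A*) ∩ 𝔉` is, whatever `z`. -/

namespace Ctx

variable (c : Ctx F H1 Hm1) {z : ℂ}

lemma conj_mem_res (hz : z ∈ c.res) : starRingEnd ℂ z ∈ c.res := by
  by_cases him : z.im = 0
  · rwa [Complex.conj_eq_iff_im.mpr him]
  · exact c.res_nonreal _ (by simpa using him)

lemma pair_sub (x y : Hm1) (φ : H1) : c.pair (x - y) φ = c.pair x φ - c.pair y φ :=
  eq_sub_of_add_eq (by rw [← c.pair_add, sub_add_cancel])

lemma Hbar_j1_apply (φ : H1) : c.Hbar (c.j1 φ) = c.jm (c.Hop φ) :=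
  DFunLike.congr_fun c.Hbar_ext φ

lemma RM_jm_apply (hz : z ∈ c.res) (χ : F) : c.RM z (c.jm χ) = c.j1 (c.RF z χ) :=
  DFunLike.congr_fun (c.RM_ext z hz) χ

lemma sub_Hbar_RM_apply (hz : z ∈ c.res) (x : Hm1) :
    z • c.jm (c.RM z x) - c.Hbar (c.RM z x) = x := by
  simpa using DFunLike.congr_fun (c.RM_inv_right z hz) x

lemma RM_injective (hz : z ∈ c.res) : Function.Injective (c.RM z) :=
  Function.LeftInverse.injective (g := fun u => z • c.jm u - c.Hbar u) (c.sub_Hbar_RM_apply hz)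

lemma eq_jm_of_RM_apply_eq_j1 (hz : z ∈ c.res) {x : Hm1} {φ : H1}
    (h : c.RM z x = c.j1 φ) : x = c.jm (z • c.j1 φ - c.Hop φ) := by
  rw [← c.sub_Hbar_RM_apply hz x, h, c.Hbar_j1_apply, map_sub, map_smul]

lemma pair_Hbar (u : F) (φ : H1) : c.pair (c.Hbar u) φ = ⟪u, c.Hop φ⟫ := by
  refine congrFun (Continuous.ext_on c.j1_dense ((c.pair_cont φ).comp c.Hbar.continuous)
    (continuous_id.inner continuous_const) ?_) u
  rintro _ ⟨w, rfl⟩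
  simp only [Function.comp_apply, c.Hbar_j1_apply, c.pair_jm]
  exact (c.Hsymm w φ).symm

lemma pair_RF_conj (hz : z ∈ c.res) (x : Hm1) (χ : F) :
    c.pair x (c.RF (starRingEnd ℂ z) χ) = ⟪c.RM z x, χ⟫ := by
  have hχ : starRingEnd ℂ z • c.j1 (c.RF (starRingEnd ℂ z) χ) -
      c.Hop (c.RF (starRingEnd ℂ z) χ) = χ := by
    simpa using DFunLike.congr_fun (c.RF_inv_right _ (c.conj_mem_res hz)) χ
  conv_lhs => rw [← c.sub_Hbar_RM_apply hz x]
  rw [c.pair_sub, c.pair_smul, c.pair_jm, c.pair_Hbar, ← inner_smul_right, ← inner_sub_right,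
    hχ]

lemma G_apply (hz : z ∈ c.res) (ψ : F) : c.G z ψ = c.RM z (c.Astar ψ) :=
  ext_inner_right ℂ fun χ => by
    rw [G, ContinuousLinearMap.adjoint_inner_left, ContinuousLinearMap.comp_apply,
      ← c.Astar_spec, c.pair_RF_conj hz]

lemma G_apply_eq_zero_iff (hz : z ∈ c.res) (ψ : F) : c.G z ψ = 0 ↔ c.Astar ψ = 0 := by
  rw [c.G_apply hz, ← map_zero (c.RM z), (c.RM_injective hz).eq_iff]

lemma range_G_inf_h1_trivial_iff (hz : z ∈ c.res) :
    (∀ (ψ : F) (φ : H1), c.G z ψ = c.j1 φ → c.G z ψ = 0) ↔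
      (∀ (ψ χ : F), c.Astar ψ = c.jm χ → c.Astar ψ = 0) := by
  simp only [c.G_apply_eq_zero_iff hz]
  constructor
  · intro hG ψ χ hA
    exact hG ψ _ (by rw [c.G_apply hz, hA, c.RM_jm_apply hz])
  · intro hA ψ φ hG
    exact hA ψ _ (c.eq_jm_of_RM_apply_eq_j1 hz ((c.G_apply hz ψ).symm.trans hG))

end Ctx

/-- (i) If `ran(G_{z∘}) ∩ 𝔥₁ = {0}` for a single `z∘ ∈ ρ(H)`, then
`ran(G_z) ∩ 𝔥₁ = {0}` for every `z ∈ ρ(H)`.  (ii) For `z ∈ ρ(H)`,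
`ran(G_z) ∩ 𝔥₁ = {0}` if and only if `ran(A*) ∩ 𝔉 = {0}`. -/
theorem statement1 (c : Ctx F H1 Hm1) :
    ((∃ z₀ ∈ c.res, ∀ (ψ : F) (φ : H1), c.G z₀ ψ = c.j1 φ → c.G z₀ ψ = 0) →
      ∀ z ∈ c.res, ∀ (ψ : F) (φ : H1), c.G z ψ = c.j1 φ → c.G z ψ = 0) ∧
    (∀ z ∈ c.res,
      ((∀ (ψ : F) (φ : H1), c.G z ψ = c.j1 φ → c.G z ψ = 0) ↔
        (∀ (ψ χ : F), c.Astar ψ = c.jm χ → c.Astar ψ = 0))) :=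
  ⟨fun ⟨_, hz₀, h⟩ _ hz =>
      (c.range_G_inf_h1_trivial_iff hz).mpr ((c.range_G_inf_h1_trivial_iff hz₀).mp h),
    fun _ hz => c.range_G_inf_h1_trivial_iff hz⟩
end
end

section
/- If A ∈ 𝔅(𝔥_s,𝔉) for some s ∈ (0,1), then both 1−G_λ and 1−G_λ* have bounded inverses in 𝔅(𝔉) whenever λ < λ_inf − max{√(λ_inf² + 1), ‖A‖_{𝔅(𝔥_s,𝔉)}^{1/(1−s)}}. (Indeed for such λ one has ‖G_λ‖_{𝔅(𝔉)} = ‖G_λ*‖_{𝔅(𝔉)} < 1.) -/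
open scoped InnerProductSpace ComplexConjugate

noncomputable section

local notation "⟪" x ", " y "⟫" => @inner ℂ _ _ x y

variable {F H1 Hm1 : Type*}
  [NormedAddCommGroup F] [InnerProductSpace ℂ F] [CompleteSpace F]
  [NormedAddCommGroup H1] [InnerProductSpace ℂ H1] [CompleteSpace H1]
  [NormedAddCommGroup Hm1] [InnerProductSpace ℂ Hm1] [CompleteSpace Hm1]

/-!
`G_λ` is the adjoint of `A R_λ`, so it suffices to show `‖A R_λ‖ < 1`. By the interpolation
inequality, `‖A R_λ ψ‖ ≤ ‖A‖ ‖R_λ ψ‖₁ˢ ‖R_λ ψ‖¹⁻ˢ`. The self-adjoint operator `R_λ` on `𝔉` has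
norm at most `(λ_inf - λ)⁻¹`, since by the resolvent identity a nonzero point `b` of its spectrum
forces `λ - b⁻¹ ∈ σ(H)`. This norm bound yields the form bound `H ≥ λ_inf`, and then
`R_λ : 𝔉 → 𝔥₁` is a contraction as soon as `(λ_inf - λ)² ≥ λ_inf² + 1`. Hence
`‖A R_λ‖ ≤ ‖A‖ (λ_inf - λ)^(s-1) < 1`, and a Neumann series inverts `1 - G_λ` and `1 - G_λ*`.
-/

lemma norm_ofReal_smul_sub_sq {E : Type*} [NormedAddCommGroup E] [InnerProductSpace ℂ E]
    (μ : ℝ) (x y : E) :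
    ‖(μ : ℂ) • x - y‖ ^ 2 = μ ^ 2 * ‖x‖ ^ 2 - 2 * μ * (⟪x, y⟫).re + ‖y‖ ^ 2 := by
  rw [@norm_sub_sq ℂ, norm_smul, Complex.norm_real, Real.norm_eq_abs, mul_pow, sq_abs,
    inner_smul_left, Complex.conj_ofReal, RCLike.re_to_complex, Complex.re_ofReal_mul]
  ring

lemma nonneg_of_forall_lt_le_neg_mul {L a d : ℝ} (h : ∀ μ < L, a ≤ -μ * d) : 0 ≤ d := by
  by_contra! hd
  have hlim : Filter.Tendsto (fun μ : ℝ => -μ * d) Filter.atBot Filter.atBot := by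
    simpa only [neg_mul_comm, id] using Filter.tendsto_id.atBot_mul_const (neg_pos.2 hd)
  obtain ⟨μ, hμL, hμa⟩ :=
    ((Filter.eventually_lt_atBot L).and (hlim.eventually_lt_atBot a)).exists
  exact (h μ hμL).not_gt hμa

lemma isUnit_algebraMap_sub_of_sub_eq_smul_mul {𝕜 R : Type*} [Field 𝕜] [Ring R] [Algebra 𝕜 R]
    {B B' : R} {b : 𝕜} (hb : b ≠ 0) (h : B - B' = -b⁻¹ • (B * B'))
    (h' : B - B' = -b⁻¹ • (B' * B)) : IsUnit (algebraMap 𝕜 R b - B) := by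
  have hBB' : B * B' = -b • (B - B') := by rw [h, smul_smul]; simp [hb]
  have hB'B : B' * B = -b • (B - B') := by rw [h', smul_smul]; simp [hb]
  refine ⟨⟨_, b⁻¹ • (1 + b⁻¹ • B'), ?_, ?_⟩, rfl⟩
  · simp only [Algebra.algebraMap_eq_smul_one, sub_mul, mul_smul_comm, smul_mul_assoc, mul_add,
      one_mul, mul_one, hBB']
    match_scalars <;> field_simp <;> ring
  · simp only [Algebra.algebraMap_eq_smul_one, mul_sub, mul_smul_comm, smul_mul_assoc, add_mul,
      one_mul, mul_one, hB'B]
    match_scalars <;> field_simp <;> ring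

namespace Ctx

variable (c : Ctx F H1 Hm1)

lemma RF_apply_smul_sub {z : ℂ} (hz : z ∈ c.res) (φ : H1) :
    c.RF z (z • c.j1 φ - c.Hop φ) = φ := by
  simpa using congrArg (· φ) (c.RF_inv_left z hz)

lemma smul_sub_apply_RF {z : ℂ} (hz : z ∈ c.res) (ψ : F) :
    z • c.j1 (c.RF z ψ) - c.Hop (c.RF z ψ) = ψ := by
  simpa using congrArg (· ψ) (c.RF_inv_right z hz)

lemma j1_comp_RF_sub {z w : ℂ} (hz : z ∈ c.res) (hw : w ∈ c.res) :
    c.j1.comp (c.RF z) - c.j1.comp (c.RF w) =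
      (w - z) • (c.j1.comp (c.RF z) * c.j1.comp (c.RF w)) := by
  ext ψ
  set φ := c.RF w ψ
  have hψ : ψ = (z • c.j1 φ - c.Hop φ) + (w - z) • c.j1 φ := by
    rw [← c.smul_sub_apply_RF hw ψ]; module
  have : c.j1 (c.RF z ψ) = c.j1 φ + (w - z) • c.j1 (c.RF z (c.j1 φ)) := by
    conv_lhs => rw [hψ]
    rw [map_add, map_smul, c.RF_apply_smul_sub hz, map_add, map_smul]
  simp only [sub_apply, smul_apply, mul_apply_eq_comp, ContinuousLinearMap.comp_apply, this]
  abel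

lemma isSelfAdjoint_j1_comp_RF {μ : ℝ} (hμ : (μ : ℂ) ∈ c.res) :
    IsSelfAdjoint (c.j1.comp (c.RF μ)) := by
  rw [ContinuousLinearMap.isSelfAdjoint_iff_isSymmetric]
  intro ψ χ
  simp only [ContinuousLinearMap.coe_coe, ContinuousLinearMap.comp_apply]
  calc ⟪c.j1 (c.RF μ ψ), χ⟫
      = ⟪c.j1 (c.RF μ ψ), (μ : ℂ) • c.j1 (c.RF μ χ) - c.Hop (c.RF μ χ)⟫ := by
        rw [c.smul_sub_apply_RF hμ]
    _ = ⟪(μ : ℂ) • c.j1 (c.RF μ ψ) - c.Hop (c.RF μ ψ), c.j1 (c.RF μ χ)⟫ := by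
        rw [inner_sub_right, inner_smul_right, c.Hsymm, inner_sub_left, inner_smul_left,
          Complex.conj_ofReal]
    _ = ⟪ψ, c.j1 (c.RF μ χ)⟫ := by rw [c.smul_sub_apply_RF hμ]

lemma isUnit_algebraMap_sub_j1_comp_RF {z b : ℂ} (hz : z ∈ c.res) (hb : b ≠ 0)
    (hzb : z - b⁻¹ ∈ c.res) : IsUnit (algebraMap ℂ (F →L[ℂ] F) b - c.j1.comp (c.RF z)) := by
  refine isUnit_algebraMap_sub_of_sub_eq_smul_mul (B' := c.j1.comp (c.RF (z - b⁻¹))) hb ?_ ?_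
  · rw [c.j1_comp_RF_sub hz hzb]; congr 1; ring
  · rw [← neg_sub, c.j1_comp_RF_sub hzb hz, ← neg_smul]; congr 1; ring

lemma norm_j1_comp_RF_le {μ : ℝ} (hμ : μ < c.lamInf) :
    ‖c.j1.comp (c.RF μ)‖ ≤ (c.lamInf - μ)⁻¹ := by
  have hB := c.isSelfAdjoint_j1_comp_RF (c.res_below μ hμ)
  have hspec : ∀ z ∈ spectrum ℂ (c.j1.comp (c.RF μ)), ‖z‖ ≤ (c.lamInf - μ)⁻¹ := by
    intro z hz
    obtain ⟨b, rfl⟩ : ∃ b : ℝ, z = b := ⟨z.re, hB.mem_spectrum_eq_re hz⟩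
    rcases eq_or_ne b 0 with rfl | hb
    · simpa using (sub_pos.2 hμ).le
    have hL : c.lamInf ≤ μ - b⁻¹ := by
      by_contra! hlt
      refine spectrum.mem_iff.1 hz (c.isUnit_algebraMap_sub_j1_comp_RF (c.res_below μ hμ)
        (Complex.ofReal_ne_zero.2 hb) ?_)
      exact_mod_cast c.res_below _ hlt
    have hbneg : b < 0 := inv_lt_zero.1 (by linarith)
    rw [Complex.norm_real, Real.norm_eq_abs, abs_of_neg hbneg, ← inv_inv (-b), inv_neg]
    exact inv_anti₀ (sub_pos.2 hμ) (by linarith)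
  have h : ENNReal.ofReal ‖c.j1.comp (c.RF μ)‖ ≤ ENNReal.ofReal (c.lamInf - μ)⁻¹ := by
    rw [ofReal_norm, enorm_eq_nnnorm, ← hB.spectralRadius_eq_nnnorm]
    refine iSup₂_le fun z hz => ?_
    rw [← enorm_eq_nnnorm, ← ofReal_norm]
    exact ENNReal.ofReal_le_ofReal (hspec z hz)
  exact (ENNReal.ofReal_le_ofReal_iff (by simpa using (sub_pos.2 hμ).le)).1 h

lemma lamInf_mul_le_re_inner_Hop (φ : H1) :
    c.lamInf * ‖c.j1 φ‖ ^ 2 ≤ (⟪c.j1 φ, c.Hop φ⟫).re := by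
  suffices h : 0 ≤ 2 * ((⟪c.j1 φ, c.Hop φ⟫).re - c.lamInf * ‖c.j1 φ‖ ^ 2) by linarith
  refine nonneg_of_forall_lt_le_neg_mul (L := c.lamInf)
    (a := c.lamInf ^ 2 * ‖c.j1 φ‖ ^ 2 - ‖c.Hop φ‖ ^ 2) fun μ hμ => ?_
  have hres : c.j1 φ = c.j1.comp (c.RF μ) ((μ : ℂ) • c.j1 φ - c.Hop φ) := by
    rw [ContinuousLinearMap.comp_apply, c.RF_apply_smul_sub (c.res_below μ hμ)]
  have hbound : (c.lamInf - μ) * ‖c.j1 φ‖ ≤ ‖(μ : ℂ) • c.j1 φ - c.Hop φ‖ := by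
    rw [← le_inv_mul_iff₀ (sub_pos.2 hμ)]
    calc ‖c.j1 φ‖ ≤ ‖c.j1.comp (c.RF μ)‖ * ‖(μ : ℂ) • c.j1 φ - c.Hop φ‖ := by
          conv_lhs => rw [hres]
          exact ContinuousLinearMap.le_opNorm _ _
      _ ≤ (c.lamInf - μ)⁻¹ * ‖(μ : ℂ) • c.j1 φ - c.Hop φ‖ := by
          gcongr; exact c.norm_j1_comp_RF_le hμ
  have hsq := pow_le_pow_left₀ (by nlinarith [norm_nonneg (c.j1 φ)]) hbound 2
  rw [norm_ofReal_smul_sub_sq] at hsq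
  nlinarith

lemma norm_RF_le {lam : ℝ} (hlam : √(c.lamInf ^ 2 + 1) ≤ c.lamInf - lam) (ψ : F) :
    ‖c.RF lam ψ‖ ≤ ‖ψ‖ := by
  have hsq : c.lamInf ^ 2 + 1 ≤ (c.lamInf - lam) ^ 2 := by
    simpa [Real.sq_sqrt (by positivity : (0 : ℝ) ≤ c.lamInf ^ 2 + 1)] using
      pow_le_pow_left₀ (Real.sqrt_nonneg _) hlam 2
  have hlt : lam < c.lamInf := by
    linarith [Real.sqrt_pos.2 (by positivity : (0 : ℝ) < c.lamInf ^ 2 + 1)]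
  have hneg : lam ≤ 0 := by nlinarith
  set φ := c.RF lam ψ
  have hψ : ‖ψ‖ ^ 2 = lam ^ 2 * ‖c.j1 φ‖ ^ 2 - 2 * lam * (⟪c.j1 φ, c.Hop φ⟫).re
      + ‖c.Hop φ‖ ^ 2 := by
    rw [← norm_ofReal_smul_sub_sq, c.smul_sub_apply_RF (c.res_below lam hlt)]
  have hform := c.lamInf_mul_le_re_inner_Hop φ
  rw [← pow_le_pow_iff_left₀ (norm_nonneg _) (norm_nonneg _) two_ne_zero, c.norm1_sq, hψ]
  nlinarith [mul_le_mul_of_nonneg_left hform (by linarith : 0 ≤ -2 * lam),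
    mul_le_mul_of_nonneg_right hsq (sq_nonneg ‖c.j1 φ‖)]

lemma norm_A_comp_RF_le {s CA lam : ℝ} (hs : s ∈ Set.Icc (0 : ℝ) 1) (hCA : 0 ≤ CA)
    (hA : ∀ ψ : H1, ‖c.A ψ‖ ≤ CA * c.ns s ψ)
    (hlam : √(c.lamInf ^ 2 + 1) ≤ c.lamInf - lam) :
    ‖c.A.comp (c.RF lam)‖ ≤ CA / (c.lamInf - lam) ^ (1 - s) := by
  obtain ⟨hs0, hs1⟩ := hs
  have hpos : 0 < c.lamInf - lam :=
    (Real.sqrt_pos.2 (by positivity)).trans_le hlam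
  refine ContinuousLinearMap.opNorm_le_bound _ (by positivity) fun ψ => ?_
  have hj1 : ‖c.j1 (c.RF lam ψ)‖ ≤ (c.lamInf - lam)⁻¹ * ‖ψ‖ :=
    ((c.j1.comp (c.RF lam)).le_opNorm ψ).trans
      (by gcongr; exact c.norm_j1_comp_RF_le (by linarith))
  calc ‖c.A (c.RF lam ψ)‖ ≤ CA * c.ns s (c.RF lam ψ) := hA _
    _ ≤ CA * (‖c.RF lam ψ‖ ^ s * ‖c.j1 (c.RF lam ψ)‖ ^ (1 - s)) := by
        gcongr; exact c.ns_interp s hs0 hs1 _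
    _ ≤ CA * (‖ψ‖ ^ s * ((c.lamInf - lam)⁻¹ * ‖ψ‖) ^ (1 - s)) := by
        gcongr
        exact c.norm_RF_le hlam ψ
    _ = CA / (c.lamInf - lam) ^ (1 - s) * ‖ψ‖ := by
        have hψ : ‖ψ‖ ^ s * ‖ψ‖ ^ (1 - s) = ‖ψ‖ := by
          rw [← Real.rpow_add' (norm_nonneg _) (by simp), add_sub_cancel, Real.rpow_one]
        rw [Real.mul_rpow (by positivity) (norm_nonneg _), Real.inv_rpow hpos.le]
        linear_combination CA / (c.lamInf - lam) ^ (1 - s) * hψ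

lemma norm_G_ofReal (lam : ℝ) : ‖c.G lam‖ = ‖c.A.comp (c.RF lam)‖ := by
  rw [G, Complex.conj_ofReal, LinearIsometryEquiv.norm_map]

end Ctx

/-- If `A ∈ 𝔅(𝔥_s,𝔉)` for some `s ∈ (0,1)`, then both `1-G_λ` and `1-G_λ*`
have bounded inverses in `𝔅(𝔉)` whenever
`λ < λ_inf - max{√(λ_inf² + 1), ‖A‖_{𝔅(𝔥_s,𝔉)}^(1/(1-s))}`; indeed for such `λ` one has
`‖G_λ‖ = ‖G_λ*‖ < 1`.  (Here `CA` is any bound for `‖A‖_{𝔅(𝔥_s,𝔉)}`.) -/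
theorem statement3 (c : Ctx F H1 Hm1)
    (s : ℝ) (hs : s ∈ Set.Ioo (0 : ℝ) 1)
    (CA : ℝ) (hCA : 0 ≤ CA) (hA : ∀ ψ : H1, ‖c.A ψ‖ ≤ CA * c.ns s ψ)
    (lam : ℝ)
    (hlam : lam < c.lamInf - max (Real.sqrt (c.lamInf ^ 2 + 1)) (CA ^ (1 / (1 - s)))) :
    ‖c.G (lam : ℂ)‖ = ‖c.Gst lam‖ ∧ ‖c.G (lam : ℂ)‖ < 1 ∧
    IsUnit ((1 : F →L[ℂ] F) - c.G (lam : ℂ)) ∧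
    IsUnit ((1 : F →L[ℂ] F) - c.Gst lam) := by
  obtain ⟨hs0, hs1⟩ := hs
  have hsqrt : √(c.lamInf ^ 2 + 1) ≤ c.lamInf - lam := by
    linarith [le_max_left (√(c.lamInf ^ 2 + 1)) (CA ^ (1 / (1 - s)))]
  have hCA_lt : CA ^ (1 / (1 - s)) < c.lamInf - lam := by
    linarith [le_max_right (√(c.lamInf ^ 2 + 1)) (CA ^ (1 / (1 - s)))]
  have hpos : 0 < c.lamInf - lam := (Real.sqrt_pos.2 (by positivity)).trans_le hsqrt
  have hG : ‖c.G lam‖ < 1 := by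
    rw [c.norm_G_ofReal]
    refine (c.norm_A_comp_RF_le ⟨hs0.le, hs1.le⟩ hCA hA hsqrt).trans_lt ?_
    rwa [div_lt_one (by positivity), ← Real.rpow_inv_lt_iff_of_pos hCA hpos.le (by linarith),
      ← one_div]
  have hGst : ‖c.Gst lam‖ = ‖c.G lam‖ := LinearIsometryEquiv.norm_map _ _
  exact ⟨hGst.symm, hG, ⟨Units.oneSub _ hG, rfl⟩, ⟨Units.oneSub _ (hGst ▸ hG), rfl⟩⟩
end
end
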